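/- arXiv:2408.06479 — 2 statements merged into one kernel-verified Lean document; each statement's English description precedes it below -/
import Mathlib

section
/- With notation as above, there is no multidegree d of positive integers with Π(d)·r(d) = 2; equivalently, no smooth complete intersection curve has genus 2. -/
lemma prod_ge_one (d : List ℤ) (hpos : ∀ x ∈ d, 1 ≤ x) : 1 ≤ d.prod := by
  induction d with
  | nil => simp
  | cons a l ih =>
    simp only [List.prod_cons]
    have ha : 1 ≤ a := hpos a (by simp)
    have hl : 1 ≤ l.prod := ih (fun x hx => hpos x (by simp [hx]))
    nlinarith

lemma prod_ge_sum (d : List ℤ) (hpos : ∀ x ∈ d, 1 ≤ x) :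
    d.sum - (d.length : ℤ) + 1 ≤ d.prod := by
  induction d with
  | nil => simp
  | cons a l ih =>
    simp only [List.prod_cons, List.sum_cons, List.length_cons]
    have ha : 1 ≤ a := hpos a (by simp)
    have hl : 1 ≤ l.prod := prod_ge_one l (fun x hx => hpos x (by simp [hx]))
    have hs := ih (fun x hx => hpos x (by simp [hx]))
    push_cast
    nlinarith

/-- There is no multidegree `d` of positive integers with `Π(d)·r(d) = 2`;
equivalently, no smooth complete intersection curve has genus `2`. -/
theorem stmt_1 (d : List ℤ) (hne : d ≠ []) (hpos : ∀ x ∈ d, 1 ≤ x) :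
    d.prod * (d.sum - (d.length : ℤ) - 2) ≠ 2 := by
  intro h
  have hP : 1 ≤ d.prod := prod_ge_one d hpos
  have hS : d.sum - (d.length : ℤ) + 1 ≤ d.prod := prod_ge_sum d hpos
  set P := d.prod with hPdef
  set r := d.sum - (d.length : ℤ) - 2 with hrdef
  have hr1 : 1 ≤ r := by nlinarith
  have hPr : r + 3 ≤ P := by omega
  nlinarith
end

section
/- A surjective homomorphism from an abelian group generated by at most m elements onto the free abelian group Z^m is an isomorphism. -/
/-!
A set of at most `m` generators of `A` gives a surjection `π : ℤ^m → A`. Then `f ∘ π` is a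
surjective endomorphism of the finitely generated `ℤ`-module `ℤ^m`, hence injective (Orzech,
or Vasconcelos over a commutative ring), and since `π` is surjective, `f` is injective.
-/

open Function

theorem LinearMap.injective_of_surjective_of_surjective_of_finite {R M N : Type*} [Ring R]
    [OrzechProperty R] [AddCommGroup M] [Module R M] [AddCommGroup N] [Module R N]
    [Module.Finite R N] (f : M →ₗ[R] N) (g : N →ₗ[R] M) (hf : Surjective f)
    (hg : Surjective g) : Injective f :=
  Injective.of_comp_right (f := f) (g := g)
    (OrzechProperty.injective_of_surjective_endomorphism (f ∘ₗ g) (hf.comp hg)) hg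

theorem Submodule.exists_surjective_of_span_eq_top_of_card_le {R M : Type*} [Semiring R]
    [AddCommMonoid M] [Module R M] {s : Finset M} {m : ℕ}
    (hs : Submodule.span R (s : Set M) = ⊤) (hcard : s.card ≤ m) :
    ∃ π : (Fin m → R) →ₗ[R] M, Surjective π := by
  obtain ⟨e⟩ : Nonempty (s ↪ Fin m) :=
    Embedding.nonempty_of_card_le (by simpa using hcard)
  have hsum : Surjective (Fintype.linearCombination R ((↑) : s → M)) := by
    rw [← LinearMap.range_eq_top, Fintype.range_linearCombination, Subtype.range_coe, hs]
  exact ⟨Fintype.linearCombination R _ ∘ₗ LinearMap.funLeft R R e,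
    hsum.comp (LinearMap.funLeft_surjective_of_injective R R e e.injective)⟩

/-- A surjective homomorphism from an abelian group generated by at most `m` elements
onto the free abelian group `ℤ^m` is injective (hence an isomorphism). -/
theorem stmt_11 {A : Type*} [AddCommGroup A] (m : ℕ)
    (hgen : ∃ s : Finset A, s.card ≤ m ∧ AddSubgroup.closure (s : Set A) = ⊤)
    (f : A →+ (Fin m → ℤ)) (hf : Function.Surjective f) :
    Function.Injective f := by
  obtain ⟨s, hcard, hclosure⟩ := hgen
  have hspan : Submodule.span ℤ (s : Set A) = ⊤ := by
    rw [← Submodule.toAddSubgroup_inj, Submodule.span_int_eq_addSubgroupClosure, hclosure]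
    rfl
  obtain ⟨π, hπ⟩ := Submodule.exists_surjective_of_span_eq_top_of_card_le hspan hcard
  exact f.toIntLinearMap.injective_of_surjective_of_surjective_of_finite π hf hπ
end
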